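/- Let x, y, z be elements of the graph group G_F. If y ≤ xyz and xyz = x·y·z (i.e., |xyz| = |x| + |y| + |z|), then y ≤ xy. -/

import Mathlib

/-!
Write `x`, `y`, `z` as geodesic words `u`, `v`, `t`, and `y⁻¹xyz` as a geodesic word `s`. By the
hypotheses, `vs` and `uvt` are both geodesic words for `xyz`. A geodesic word admits no
cancellation `a a⁻¹` even after commuting letters, and two such words for the same element are
equal in the trace monoid; this normal form theorem comes from letting the group act on reduced
traces. Projected onto any pair of non-commuting letters, traces become ordinary words, and `v`
is a prefix of the projection of `uvt`, hence of that of `uv` by length. So `uv = vs'` in the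
trace monoid with `|s'| = |u|`, i.e. `|y⁻¹xy| ≤ |x|`, and `y ≤ xy` follows by counting
lengths.
-/

open Pointwise

namespace GraphGroupPaper

/-- The set of commutator relators: `gᵢ` and `gⱼ` commute for every pair of distinct
`i, j` with `{i,j} ∉ F`. -/
def Rels (k : ℕ) (F : Set (Sym2 (Fin k))) : Set (FreeGroup (Fin k)) :=
  {w | ∃ i j : Fin k, i ≠ j ∧ s(i, j) ∉ F ∧
      w = FreeGroup.of i * FreeGroup.of j * (FreeGroup.of i)⁻¹ * (FreeGroup.of j)⁻¹}

/-- The graph group `G_F` with generators `g₁, …, g_k` and relations `gᵢgⱼ = gⱼgᵢ`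
for all distinct `i, j` with `{i,j} ∉ F`. -/
abbrev Grp (k : ℕ) (F : Set (Sym2 (Fin k))) := PresentedGroup (Rels k F)

/-- The generator `gᵢ` of the graph group. -/
def gen (k : ℕ) (F : Set (Sym2 (Fin k))) (i : Fin k) : Grp k F :=
  PresentedGroup.of i

/-- The group element corresponding to a symbol: `(i, true)` stands for `gᵢ`,
`(i, false)` stands for `gᵢ⁻¹`. -/
def sym (k : ℕ) (F : Set (Sym2 (Fin k))) (α : Fin k × Bool) : Grp k F :=
  if α.2 then gen k F α.1 else (gen k F α.1)⁻¹

/-- The product of the word `l` of symbols, as an element of the graph group. -/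
def wordProd (k : ℕ) (F : Set (Sym2 (Fin k))) (l : List (Fin k × Bool)) : Grp k F :=
  (l.map (sym k F)).prod

/-- `|x|` : the length of a shortest word in the symbols representing `x`. -/
noncomputable def len {k : ℕ} {F : Set (Sym2 (Fin k))} (x : Grp k F) : ℕ :=
  sInf {n | ∃ l : List (Fin k × Bool), wordProd k F l = x ∧ l.length = n}

/-- The partial order on `G_F`:  `x ≤ y` iff `|y| = |x| + |x⁻¹y|`. -/
def le {k : ℕ} {F : Set (Sym2 (Fin k))} (x y : Grp k F) : Prop :=
  len y = len x + len (x⁻¹ * y)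

/-- `m` is the meet `x ∧ y` (greatest lower bound w.r.t. `le`). -/
def IsMeet {k : ℕ} {F : Set (Sym2 (Fin k))} (x y m : Grp k F) : Prop :=
  le m x ∧ le m y ∧ ∀ w, le w x → le w y → le w m

/-- `j` is the (finite) join `x ∨ y` (least upper bound w.r.t. `le`);
`x ∨ y` is finite iff such a `j` exists. -/
def IsJoin {k : ℕ} {F : Set (Sym2 (Fin k))} (x y j : Grp k F) : Prop :=
  le x j ∧ le y j ∧ ∀ w, le x w → le y w → le j w

/-- `j` is the (finite) join of the set `S`. -/
def IsJoinSet {k : ℕ} {F : Set (Sym2 (Fin k))} (S : Set (Grp k F)) (j : Grp k F) : Prop :=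
  (∀ s ∈ S, le s j) ∧ ∀ w, (∀ s ∈ S, le s w) → le j w

/-- `y` is a segment of `a` if `a = x·y·z` for some `x, z`. -/
def Segment {k : ℕ} {F : Set (Sym2 (Fin k))} (y a : Grp k F) : Prop :=
  ∃ x z, a = x * y * z ∧ len a = len x + len y + len z

/-- The left-invariant metric `dist(x,y) = |x⁻¹y|`. -/
noncomputable def dist {k : ℕ} {F : Set (Sym2 (Fin k))} (x y : Grp k F) : ℕ :=
  len (x⁻¹ * y)

/-- A nonempty set `L` is convex if `x, z ∈ L` and `dist(x,y) + dist(y,z) = dist(x,z)`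
imply `y ∈ L`. -/
def ConvexSet {k : ℕ} {F : Set (Sym2 (Fin k))} (L : Set (Grp k F)) : Prop :=
  L.Nonempty ∧ ∀ x z y : Grp k F, x ∈ L → z ∈ L →
    dist x y + dist y z = dist x z → y ∈ L

/-- An ideal: nonempty, downward closed, and closed under finite joins. -/
def IdealSet {k : ℕ} {F : Set (Sym2 (Fin k))} (I : Set (Grp k F)) : Prop :=
  I.Nonempty ∧ (∀ x ∈ I, ∀ y, le y x → y ∈ I) ∧
    (∀ x ∈ I, ∀ y ∈ I, ∀ j, IsJoin x y j → j ∈ I)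

/-- `H` is closed if both `H` and `H⁻¹` are ideals. -/
def ClosedSet {k : ℕ} {F : Set (Sym2 (Fin k))} (H : Set (Grp k F)) : Prop :=
  IdealSet H ∧ IdealSet H⁻¹

/-- `m` is a minimal element of `S` w.r.t. `le`. -/
def MinimalIn {k : ℕ} {F : Set (Sym2 (Fin k))} (S : Set (Grp k F)) (m : Grp k F) : Prop :=
  m ∈ S ∧ ∀ x ∈ S, le x m → x = m

/-- `l` is a reduced (i.e. shortest) word representing `x`. -/
def MinWord {k : ℕ} {F : Set (Sym2 (Fin k))} (x : Grp k F) (l : List (Fin k × Bool)) : Prop :=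
  wordProd k F l = x ∧ l.length = len x

open Classical in
/-- `#_α(x)`: the number of occurrences of the symbol `α` (not counting `α⁻¹`)
in a reduced word representing `x`. -/
noncomputable def symCount {k : ℕ} {F : Set (Sym2 (Fin k))} (α : Fin k × Bool)
    (x : Grp k F) : ℕ :=
  if h : ∃ l, MinWord x l then h.choose.count α else 0

/-- The symbol `α` occurs in `x`. -/
def Occurs {k : ℕ} {F : Set (Sym2 (Fin k))} (α : Fin k × Bool) (x : Grp k F) : Prop :=
  0 < symCount α x

/-- `α` is a maximal symbol of `x`, i.e. `xα⁻¹ ≤ x`. -/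
def MaxSym {k : ℕ} {F : Set (Sym2 (Fin k))} (α : Fin k × Bool) (x : Grp k F) : Prop :=
  le (x * (sym k F α)⁻¹) x

/-- A peak: an element with precisely one maximal symbol. -/
def IsPeak {k : ℕ} {F : Set (Sym2 (Fin k))} (p : Grp k F) : Prop :=
  ∃! α : Fin k × Bool, MaxSym α p

/-- An `α`-peak: a peak whose unique maximal symbol is `α`. -/
def AlphaPeak {k : ℕ} {F : Set (Sym2 (Fin k))} (α : Fin k × Bool) (p : Grp k F) : Prop :=
  MaxSym α p ∧ ∀ β, MaxSym β p → β = α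

/-- The set of generator indices occurring in `b`. -/
def Support {k : ℕ} {F : Set (Sym2 (Fin k))} (b : Grp k F) : Set (Fin k) :=
  {i | Occurs (i, true) b ∨ Occurs (i, false) b}

/-- `b` is connected: the generators occurring in `b` induce a connected subgraph of
the graph `([k], F)`. -/
def Conn {k : ℕ} {F : Set (Sym2 (Fin k))} (b : Grp k F) : Prop :=
  (SimpleGraph.induce (Support b) (SimpleGraph.fromEdgeSet F)).Connected

/-- `b` is cyclically reduced: `b ∧ b⁻¹ = 1`. -/
def CycRed {k : ℕ} {F : Set (Sym2 (Fin k))} (b : Grp k F) : Prop :=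
  IsMeet b b⁻¹ 1


section Trace

variable {A : Type*} (G : SimpleGraph A)

inductive SwapStep : List A → List A → Prop
  | swap (l₁ l₂ : List A) {a b : A} (h : G.Adj a b) :
      SwapStep (l₁ ++ a :: b :: l₂) (l₁ ++ b :: a :: l₂)

/-- Equality in the trace monoid (free partially commutative monoid) in which the letters
`a`, `b` commute exactly when `G.Adj a b`. -/
def TraceEq : List A → List A → Prop :=
  Relation.EqvGen (SwapStep G)

def traceSetoid : Setoid (List A) :=
  ⟨TraceEq G, Relation.EqvGen.is_equivalence _⟩

variable {G}

namespace TraceEq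

theorem refl (l : List A) : TraceEq G l l := Relation.EqvGen.refl l

theorem symm {l l' : List A} (h : TraceEq G l l') : TraceEq G l' l :=
  Relation.EqvGen.symm _ _ h

theorem trans {l l' l'' : List A} (h : TraceEq G l l') (h' : TraceEq G l' l'') :
    TraceEq G l l'' :=
  Relation.EqvGen.trans _ _ _ h h'

theorem swap (l : List A) {a b : A} (h : G.Adj a b) : TraceEq G (a :: b :: l) (b :: a :: l) :=
  Relation.EqvGen.rel _ _ (SwapStep.swap [] l h)

theorem length_eq {l l' : List A} (h : TraceEq G l l') : l.length = l'.length := by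
  induction h with
  | rel _ _ hs => cases hs; simp
  | refl => rfl
  | symm _ _ _ ih => exact ih.symm
  | trans _ _ _ _ _ ih ih' => exact ih.trans ih'

theorem append_left (m : List A) {l l' : List A} (h : TraceEq G l l') :
    TraceEq G (m ++ l) (m ++ l') := by
  induction h with
  | rel _ _ hs =>
    cases hs with
    | swap l₁ l₂ h =>
      have hs := SwapStep.swap (G := G) (m ++ l₁) l₂ h
      simp only [List.append_assoc] at hs
      exact .rel _ _ hs
  | refl => exact refl _
  | symm _ _ _ ih => exact ih.symm
  | trans _ _ _ _ _ ih ih' => exact ih.trans ih'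

theorem cons (a : A) {l l' : List A} (h : TraceEq G l l') : TraceEq G (a :: l) (a :: l') :=
  h.append_left [a]

theorem prod_map_eq {M : Type*} [Monoid M] {f : A → M}
    (hf : ∀ a b, G.Adj a b → Commute (f a) (f b)) {l l' : List A} (h : TraceEq G l l') :
    (l.map f).prod = (l'.map f).prod := by
  induction h with
  | rel _ _ hs =>
    cases hs with
    | swap l₁ l₂ h => simp only [List.map_append, List.map_cons, List.prod_append,
        List.prod_cons, (hf _ _ h).left_comm]
  | refl => rfl
  | symm _ _ _ ih => exact ih.symm
  | trans _ _ _ _ _ ih ih' => exact ih.trans ih'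

end TraceEq

theorem traceEq_append_cons {a : A} {p : List A} (q : List A) (hp : ∀ c ∈ p, G.Adj a c) :
    TraceEq G (p ++ a :: q) (a :: (p ++ q)) := by
  induction p with
  | nil => exact .refl _
  | cons c p ih =>
    have hac := hp c List.mem_cons_self
    exact ((ih fun d hd => hp d (List.mem_cons_of_mem c hd)).cons c).trans (.swap _ hac.symm)

variable [DecidableEq A]

/-- For non-commuting `a`, `b` (including `a = b`) these projections are complete invariants
of traces. -/
def pairProj (a b : A) (l : List A) : List A :=
  l.filter fun c => c = a ∨ c = b

@[simp]
theorem pairProj_nil (a b : A) : pairProj a b [] = [] := rfl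

@[simp]
theorem pairProj_cons (a b c : A) (l : List A) :
    pairProj a b (c :: l) = if c = a ∨ c = b then c :: pairProj a b l else pairProj a b l := by
  by_cases h : c = a ∨ c = b <;> simp [pairProj, h]

@[simp]
theorem pairProj_append (a b : A) (l l' : List A) :
    pairProj a b (l ++ l') = pairProj a b l ++ pairProj a b l' :=
  List.filter_append ..

omit [DecidableEq A] in
theorem not_adj_of_mem_pair {a b c d : A} (hab : ¬G.Adj a b) (hc : c = a ∨ c = b)
    (hd : d = a ∨ d = b) : ¬G.Adj c d := by
  rcases hc with rfl | rfl <;> rcases hd with rfl | rfl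
  exacts [G.irrefl, hab, fun h => hab h.symm, G.irrefl]

theorem TraceEq.pairProj_eq {l l' : List A} (h : TraceEq G l l') {a b : A} (hab : ¬G.Adj a b) :
    pairProj a b l = pairProj a b l' := by
  induction h with
  | rel _ _ hs =>
    cases hs with
    | swap l₁ l₂ hcd =>
      rename_i c d
      by_cases hc : c = a ∨ c = b <;> by_cases hd : d = a ∨ d = b
      · exact absurd hcd (not_adj_of_mem_pair hab hc hd)
      all_goals simp [hc, hd]
  | refl => rfl
  | symm _ _ _ ih => exact ih.symm
  | trans _ _ _ _ _ ih ih' => exact ih.trans ih'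

theorem pairProj_eq_nil {a b c : A} {p : List A} (hp : ∀ d ∈ p, G.Adj c d) (hab : ¬G.Adj a b)
    (hc : c = a ∨ c = b) : pairProj a b p = [] :=
  List.filter_eq_nil_iff.mpr fun d hd hd' =>
    not_adj_of_mem_pair hab hc (by simpa using hd') (hp d hd)

theorem exists_eq_append_cons_of_pairProj {a : A} {w : List A}
    (hw : ∀ b, ¬G.Adj a b → ∃ r, pairProj a b w = a :: r) :
    ∃ p q, w = p ++ a :: q ∧ ∀ c ∈ p, G.Adj a c := by
  induction w with
  | nil => simpa using hw a G.irrefl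
  | cons c w ih =>
    by_cases hca : c = a
    · exact ⟨[], w, by rw [hca]; rfl, by simp⟩
    by_cases hac : G.Adj a c
    · obtain ⟨p, q, rfl, hp⟩ := ih fun b hab => by
        have hcb : c ≠ b := by rintro rfl; exact hab hac
        simpa [hca, hcb] using hw b hab
      exact ⟨c :: p, q, rfl, by simpa [hac] using hp⟩
    · obtain ⟨r, hr⟩ := hw c hac
      simp only [pairProj_cons, or_true, ↓reduceIte, List.cons.injEq] at hr
      exact (hca hr.1).elim

theorem exists_traceEq_append_of_pairProj_prefix (v : List A) {w : List A}
    (h : ∀ a b, ¬G.Adj a b → pairProj a b v <+: pairProj a b w) :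
    ∃ s, TraceEq G w (v ++ s) := by
  induction v generalizing w with
  | nil => exact ⟨w, .refl _⟩
  | cons a v ih =>
    have hhead : ∀ b, ¬G.Adj a b → ∃ r, pairProj a b w = a :: r := fun b hab => by
      obtain ⟨t, ht⟩ := h a b hab
      exact ⟨pairProj a b v ++ t, by simpa using ht.symm⟩
    obtain ⟨p, q, rfl, hp⟩ := exists_eq_append_cons_of_pairProj hhead
    obtain ⟨s, hs⟩ := ih (w := p ++ q) fun b c hbc => by
      have hpre := h b c hbc
      by_cases ha : a = b ∨ a = c
      · simpa [pairProj_eq_nil hp hbc ha, ha] using hpre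
      · simpa [ha] using hpre
    exact ⟨s, (traceEq_append_cons q hp).trans (hs.cons a)⟩

theorem traceEq_of_pairProj_eq {l l' : List A}
    (h : ∀ a b, ¬G.Adj a b → pairProj a b l = pairProj a b l') : TraceEq G l l' := by
  obtain ⟨s, hs⟩ := exists_traceEq_append_of_pairProj_prefix l (w := l') fun a b hab => by
    rw [h a b hab]
  suffices s = [] by simpa [this] using hs.symm
  -- the projection onto `c, c` keeps exactly the occurrences of `c`
  refine List.eq_nil_iff_forall_not_mem.mpr fun c hc => ?_
  have hlen := congrArg List.length ((hs.pairProj_eq G.irrefl).symm.trans (h c c G.irrefl).symm)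
  have hmem : c ∈ pairProj c c s := List.mem_filter.mpr ⟨hc, by simp⟩
  simp only [pairProj_append, List.length_append, Nat.add_eq_left, List.length_eq_zero_iff] at hlen
  simp [hlen] at hmem

theorem TraceEq.of_cons {a : A} {l l' : List A} (h : TraceEq G (a :: l) (a :: l')) :
    TraceEq G l l' :=
  traceEq_of_pairProj_eq fun b c hbc => by
    by_cases ha : a = b ∨ a = c <;> simpa [ha] using h.pairProj_eq hbc

theorem TraceEq.exists_of_cons_cons {a b : A} {m n : List A} (h : TraceEq G (a :: m) (b :: n))
    (hab : a ≠ b) : G.Adj a b ∧ ∃ r, TraceEq G m (b :: r) ∧ TraceEq G n (a :: r) := by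
  obtain ⟨_ | ⟨c, p⟩, q, hw, hp⟩ := exists_eq_append_cons_of_pairProj (w := a :: m) (a := b)
    fun c hbc => ⟨pairProj b c n, (h.pairProj_eq hbc).trans (by simp)⟩
  · exact absurd (List.cons.inj hw).1 hab
  simp only [List.cons_append, List.cons.injEq] at hw
  obtain ⟨rfl, rfl⟩ := hw
  have hba : G.Adj b a := hp a List.mem_cons_self
  have hm := traceEq_append_cons q fun d hd => hp d (List.mem_cons_of_mem a hd)
  refine ⟨hba.symm, p ++ q, hm, TraceEq.of_cons (a := b) ?_⟩
  exact h.symm.trans ((hm.cons a).trans (.swap _ hba.symm))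

theorem TraceEq.exists_append_of_append_append {u v s t : List A}
    (h : TraceEq G (v ++ s) (u ++ v ++ t)) : ∃ s', TraceEq G (u ++ v) (v ++ s') :=
  exists_traceEq_append_of_pairProj_prefix v fun a b hab => by
    have hpre : pairProj a b v <+: pairProj a b (u ++ v) ++ pairProj a b t := by
      rw [← pairProj_append, ← h.pairProj_eq hab, pairProj_append]
      exact List.prefix_append _ _
    exact List.prefix_of_prefix_length_le hpre (List.prefix_append _ _) (by simp)

end Trace

section Reduced

variable {ι : Type*} {G : SimpleGraph ι}

abbrev letterGraph (G : SimpleGraph ι) : SimpleGraph (ι × Bool) :=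
  G.comap Prod.fst

def invLetter (a : ι × Bool) : ι × Bool :=
  (a.1, !a.2)

@[simp]
theorem invLetter_invLetter (a : ι × Bool) : invLetter (invLetter a) = a := by
  simp [invLetter]

theorem not_letterGraph_adj_invLetter (a : ι × Bool) : ¬(letterGraph G).Adj a (invLetter a) :=
  G.irrefl

variable (G) in
def IsReduced (l : List (ι × Bool)) : Prop :=
  ∀ p a q, ¬TraceEq (letterGraph G) l (p ++ a :: invLetter a :: q)

namespace IsReduced

variable {l l' : List (ι × Bool)} {a : ι × Bool}

theorem nil : IsReduced G [] :=
  fun p a q h => by simpa using h.length_eq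

theorem of_traceEq (h : IsReduced G l) (h' : TraceEq (letterGraph G) l l') : IsReduced G l' :=
  fun p b q h'' => h p b q (h'.trans h'')

theorem tail (h : IsReduced G (a :: l)) : IsReduced G l :=
  fun p b q h' => h (a :: p) b q (h'.cons a)

theorem not_exists_traceEq_cons (h : IsReduced G (a :: l)) :
    ¬∃ m, TraceEq (letterGraph G) l (invLetter a :: m) :=
  fun ⟨m, hm⟩ => h [] a m (hm.cons a)

end IsReduced

variable (G) in
/-- The graph group acts on reduced traces, the letter `a` cancelling a leading `a⁻¹` if there
is one and being prepended otherwise; this action shows that reduced words are normal forms. -/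
def ReducedTrace : Type _ :=
  Quotient ((traceSetoid (letterGraph G)).comap (Subtype.val : {l // IsReduced G l} → _))

namespace ReducedTrace

variable {l m : List (ι × Bool)}

def mk (l : List (ι × Bool)) (hl : IsReduced G l) : ReducedTrace G :=
  Quotient.mk _ ⟨l, hl⟩

theorem mk_eq_mk {hl : IsReduced G l} {hm : IsReduced G m} :
    mk l hl = mk m hm ↔ TraceEq (letterGraph G) l m :=
  Quotient.eq

@[elab_as_elim]
theorem ind {P : ReducedTrace G → Prop} (h : ∀ l hl, P (mk l hl)) (t : ReducedTrace G) : P t :=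
  Quotient.ind (fun l => h l.1 l.2) t

end ReducedTrace

variable [DecidableEq ι]

theorem traceEq_cons_cancel {a b : ι × Bool} (p : List (ι × Bool)) {l q : List (ι × Bool)}
    (h : TraceEq (letterGraph G) (a :: l) (p ++ b :: invLetter b :: q)) :
    (∃ p' q', TraceEq (letterGraph G) l (p' ++ b :: invLetter b :: q')) ∨
      ∃ m, TraceEq (letterGraph G) l (invLetter a :: m) := by
  induction p generalizing l with
  | nil =>
    by_cases hab : a = b
    · subst hab
      exact .inr ⟨q, h.of_cons⟩
    obtain ⟨hadj, r, hl, hr⟩ := h.exists_of_cons_cons hab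
    have hba : invLetter b ≠ a := by
      rintro rfl
      exact not_letterGraph_adj_invLetter b hadj.symm
    obtain ⟨-, r', -, hr'⟩ := hr.exists_of_cons_cons hba
    exact .inl ⟨[], r', hl.trans (hr'.cons b)⟩
  | cons c p ih =>
    by_cases hac : a = c
    · subst hac
      exact .inl ⟨p, q, h.of_cons⟩
    obtain ⟨hadj, r, hl, hr⟩ := h.exists_of_cons_cons hac
    rcases ih hr.symm with ⟨p', q', hr'⟩ | ⟨m, hm⟩
    · exact .inl ⟨c :: p', q', hl.trans (hr'.cons c)⟩
    · have hca : (letterGraph G).Adj c (invLetter a) := hadj.symm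
      exact .inr ⟨c :: m, hl.trans ((hm.cons c).trans (.swap m hca))⟩

theorem IsReduced.cons {l : List (ι × Bool)} {a : ι × Bool} (h : IsReduced G l)
    (ha : ¬∃ m, TraceEq (letterGraph G) l (invLetter a :: m)) : IsReduced G (a :: l) :=
  fun p b _ hpq => (traceEq_cons_cancel p hpq).elim
    (fun ⟨p', q', h'⟩ => h p' b q' h') ha

theorem not_exists_traceEq_cons_cons {a b : ι × Bool} {l : List (ι × Bool)}
    (hab : (letterGraph G).Adj a b) (ha : ¬∃ m, TraceEq (letterGraph G) l (invLetter a :: m)) :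
    ¬∃ m, TraceEq (letterGraph G) (b :: l) (invLetter a :: m) := by
  rintro ⟨m, hm⟩
  have hba : (letterGraph G).Adj b (invLetter a) := hab.symm
  obtain ⟨-, r, hr, -⟩ := hm.exists_of_cons_cons hba.ne
  exact ha ⟨r, hr⟩

namespace ReducedTrace

variable {l m : List (ι × Bool)} {a b : ι × Bool}

open Classical in
noncomputable def cancelOrCons (a : ι × Bool) (l : {l // IsReduced G l}) : ReducedTrace G :=
  if h : ∃ m, TraceEq (letterGraph G) l.1 (invLetter a :: m) then
    mk h.choose (l.2.of_traceEq h.choose_spec).tail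
  else mk (a :: l.1) (l.2.cons h)

theorem cancelOrCons_of_traceEq (l : {l // IsReduced G l})
    (h : TraceEq (letterGraph G) l.1 (invLetter a :: m)) :
    cancelOrCons a l = mk m (l.2.of_traceEq h).tail := by
  have hex : ∃ m, TraceEq (letterGraph G) l.1 (invLetter a :: m) := ⟨m, h⟩
  rw [cancelOrCons, dif_pos hex]
  exact mk_eq_mk.mpr (hex.choose_spec.symm.trans h).of_cons

theorem cancelOrCons_of_not (l : {l // IsReduced G l})
    (h : ¬∃ m, TraceEq (letterGraph G) l.1 (invLetter a :: m)) :
    cancelOrCons a l = mk (a :: l.1) (l.2.cons h) :=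
  dif_neg h

noncomputable def act (a : ι × Bool) : ReducedTrace G → ReducedTrace G :=
  Quotient.lift (cancelOrCons a) fun l l' (hll' : TraceEq _ l.1 l'.1) => by
    by_cases h : ∃ m, TraceEq (letterGraph G) l.1 (invLetter a :: m)
    · obtain ⟨m, hm⟩ := h
      rw [cancelOrCons_of_traceEq l hm, cancelOrCons_of_traceEq l' (hll'.symm.trans hm)]
    · have h' : ¬∃ m, TraceEq (letterGraph G) l'.1 (invLetter a :: m) :=
        fun ⟨m, hm⟩ => h ⟨m, hll'.trans hm⟩
      rw [cancelOrCons_of_not l h, cancelOrCons_of_not l' h']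
      exact mk_eq_mk.mpr (hll'.cons a)

theorem act_mk_of_traceEq (hl : IsReduced G l)
    (h : TraceEq (letterGraph G) l (invLetter a :: m)) :
    act a (mk l hl) = mk m (hl.of_traceEq h).tail :=
  cancelOrCons_of_traceEq ⟨l, hl⟩ h

theorem act_mk_of_not (hl : IsReduced G l)
    (h : ¬∃ m, TraceEq (letterGraph G) l (invLetter a :: m)) :
    act a (mk l hl) = mk (a :: l) (hl.cons h) :=
  cancelOrCons_of_not ⟨l, hl⟩ h

theorem act_mk_tail (hl : IsReduced G (a :: l)) : act a (mk l hl.tail) = mk (a :: l) hl :=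
  act_mk_of_not hl.tail hl.not_exists_traceEq_cons

theorem act_invLetter_mk_cons (hl : IsReduced G (a :: l)) :
    act (invLetter a) (mk (a :: l) hl) = mk l hl.tail :=
  act_mk_of_traceEq hl (by rw [invLetter_invLetter]; exact .refl _)

theorem act_invLetter_act (a : ι × Bool) (t : ReducedTrace G) :
    act (invLetter a) (act a t) = t := by
  induction t using ReducedTrace.ind with | h l hl => ?_
  by_cases h : ∃ m, TraceEq (letterGraph G) l (invLetter a :: m)
  · obtain ⟨m, hm⟩ := h
    rw [act_mk_of_traceEq hl hm, act_mk_tail (hl.of_traceEq hm)]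
    exact mk_eq_mk.mpr hm.symm
  · rw [act_mk_of_not hl h, act_invLetter_mk_cons]

theorem act_act_of_traceEq (hab : (letterGraph G).Adj a b) (hl : IsReduced G l)
    (hm : TraceEq (letterGraph G) l (invLetter a :: m)) :
    act a (act b (mk l hl)) = act b (act a (mk l hl)) := by
  have hab' : (letterGraph G).Adj (invLetter a) (invLetter b) := hab
  rw [act_mk_of_traceEq hl hm]
  by_cases hb : ∃ n, TraceEq (letterGraph G) l (invLetter b :: n)
  · obtain ⟨n, hn⟩ := hb
    obtain ⟨-, r, hmr, hnr⟩ := (hm.symm.trans hn).exists_of_cons_cons hab'.ne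
    rw [act_mk_of_traceEq hl hn, act_mk_of_traceEq _ hnr, act_mk_of_traceEq _ hmr]
  · have hbm : ¬∃ n, TraceEq (letterGraph G) m (invLetter b :: n) :=
      fun ⟨n, hn⟩ => hb ⟨invLetter a :: n, hm.trans ((hn.cons _).trans (.swap n hab'))⟩
    have hba : (letterGraph G).Adj b (invLetter a) := hab.symm
    rw [act_mk_of_not hl hb, act_mk_of_traceEq (m := b :: m) _ ((hm.cons b).trans (.swap m hba)),
      act_mk_of_not _ hbm]

theorem act_comm (hab : (letterGraph G).Adj a b) (t : ReducedTrace G) :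
    act a (act b t) = act b (act a t) := by
  induction t using ReducedTrace.ind with | h l hl => ?_
  by_cases ha : ∃ m, TraceEq (letterGraph G) l (invLetter a :: m)
  · exact act_act_of_traceEq hab hl ha.choose_spec
  by_cases hb : ∃ m, TraceEq (letterGraph G) l (invLetter b :: m)
  · exact (act_act_of_traceEq hab.symm hl hb.choose_spec).symm
  rw [act_mk_of_not hl ha, act_mk_of_not hl hb,
    act_mk_of_not _ (not_exists_traceEq_cons_cons hab ha),
    act_mk_of_not _ (not_exists_traceEq_cons_cons hab.symm hb)]
  exact mk_eq_mk.mpr (.swap l hab)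

noncomputable def actPerm (a : ι × Bool) : Equiv.Perm (ReducedTrace G) where
  toFun := act a
  invFun := act (invLetter a)
  left_inv := act_invLetter_act a
  right_inv t := by simpa using act_invLetter_act (invLetter a) t

theorem actPerm_commute (hab : (letterGraph G).Adj a b) :
    Commute (actPerm a : Equiv.Perm (ReducedTrace G)) (actPerm b) :=
  Equiv.ext (act_comm hab)

end ReducedTrace

end Reduced

section GraphGroup

variable {k : ℕ} {F : Set (Sym2 (Fin k))}

variable (F) in
def commGraph : SimpleGraph (Fin k) :=
  (SimpleGraph.fromEdgeSet F)ᶜ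

theorem commGraph_adj {i j : Fin k} : (commGraph F).Adj i j ↔ i ≠ j ∧ s(i, j) ∉ F := by
  simp +contextual [commGraph]

theorem gen_commute {i j : Fin k} (hij : (commGraph F).Adj i j) :
    Commute (gen k F i) (gen k F j) := by
  have hrel : FreeGroup.of i * FreeGroup.of j * (FreeGroup.of i)⁻¹ * (FreeGroup.of j)⁻¹ ∈
      Rels k F := ⟨i, j, hij.ne, (commGraph_adj.mp hij).2, rfl⟩
  have h := PresentedGroup.one_of_mem hrel
  simp only [map_mul, map_inv] at h
  exact commutatorElement_eq_one_iff_commute.mp h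

theorem sym_commute {a b : Fin k × Bool} (hab : (letterGraph (commGraph F)).Adj a b) :
    Commute (sym k F a) (sym k F b) := by
  have hg := gen_commute (F := F) hab
  obtain ⟨i, _ | _⟩ := a <;> obtain ⟨j, _ | _⟩ := b <;> simp only [sym] <;>
    simp only [Bool.false_eq_true, ↓reduceIte]
  exacts [hg.inv_inv, hg.inv_left, hg.inv_right, hg]

theorem sym_invLetter (a : Fin k × Bool) : sym k F (invLetter a) = (sym k F a)⁻¹ := by
  obtain ⟨i, _ | _⟩ := a <;> simp [sym, invLetter]

@[simp]
theorem wordProd_cons (a : Fin k × Bool) (l : List (Fin k × Bool)) :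
    wordProd k F (a :: l) = sym k F a * wordProd k F l :=
  List.prod_cons

@[simp]
theorem wordProd_append (l l' : List (Fin k × Bool)) :
    wordProd k F (l ++ l') = wordProd k F l * wordProd k F l' := by
  simp [wordProd]

theorem TraceEq.wordProd_eq {l l' : List (Fin k × Bool)}
    (h : TraceEq (letterGraph (commGraph F)) l l') : wordProd k F l = wordProd k F l' :=
  h.prod_map_eq fun _ _ => sym_commute

theorem wordProd_eq_mk (l : List (Fin k × Bool)) :
    wordProd k F l = PresentedGroup.mk (Rels k F) (FreeGroup.mk l) := by
  rw [FreeGroup.ext_hom (PresentedGroup.mk _) (FreeGroup.lift PresentedGroup.of) fun _ => rfl,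
    FreeGroup.lift_mk]
  exact congrArg List.prod (List.map_congr_left fun ⟨_, b⟩ _ => by cases b <;> rfl)

theorem exists_minWord (x : Grp k F) : ∃ l, MinWord x l := by
  obtain ⟨w, rfl⟩ := PresentedGroup.mk_surjective _ x
  have hne : {n | ∃ l, wordProd k F l = PresentedGroup.mk _ w ∧ l.length = n}.Nonempty :=
    ⟨_, w.toWord, by rw [wordProd_eq_mk, FreeGroup.mk_toWord], rfl⟩
  exact Nat.sInf_mem hne

theorem len_wordProd_le (l : List (Fin k × Bool)) : len (wordProd k F l) ≤ l.length :=
  Nat.sInf_le ⟨l, rfl, rfl⟩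

theorem len_mul_le (x y : Grp k F) : len (x * y) ≤ len x + len y := by
  obtain ⟨l, rfl, hl⟩ := exists_minWord x
  obtain ⟨l', rfl, hl'⟩ := exists_minWord y
  simpa [hl, hl'] using len_wordProd_le (F := F) (l ++ l')

theorem isReduced_of_length_le_len {l : List (Fin k × Bool)}
    (hl : l.length ≤ len (wordProd k F l)) : IsReduced (commGraph F) l := by
  intro p a q h
  have hprod : wordProd k F l = wordProd k F (p ++ q) := by
    simp [h.wordProd_eq, sym_invLetter]
  rw [hprod] at hl
  have hlen := h.length_eq
  have := len_wordProd_le (F := F) (p ++ q)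
  simp only [List.length_append, List.length_cons] at hlen this
  omega

noncomputable def toPerm : Grp k F →* Equiv.Perm (ReducedTrace (commGraph F)) :=
  PresentedGroup.toGroup (f := fun i => ReducedTrace.actPerm (i, true)) <| by
    rintro _ ⟨i, j, hij, hF, rfl⟩
    simp only [map_mul, map_inv, FreeGroup.lift_apply_of]
    exact (ReducedTrace.actPerm_commute (G := commGraph F) (a := (i, true)) (b := (j, true))
      (commGraph_adj.mpr ⟨hij, hF⟩)).commutator_eq

theorem toPerm_sym (a : Fin k × Bool) : toPerm (sym k F a) = ReducedTrace.actPerm a := by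
  obtain ⟨i, _ | _⟩ := a
  · show toPerm (gen k F i)⁻¹ = _
    rw [map_inv, gen, toPerm, PresentedGroup.toGroup.of]
    exact Equiv.ext fun _ => rfl
  · exact PresentedGroup.toGroup.of _

theorem toPerm_wordProd {l : List (Fin k × Bool)} (hl : IsReduced (commGraph F) l) :
    toPerm (wordProd k F l) (.mk [] .nil) = .mk l hl := by
  induction l with
  | nil => rfl
  | cons a l ih =>
    rw [wordProd_cons, map_mul, Equiv.Perm.mul_apply, ih hl.tail, toPerm_sym]
    exact ReducedTrace.act_mk_tail hl

theorem IsReduced.traceEq_of_wordProd_eq {l l' : List (Fin k × Bool)}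
    (hl : IsReduced (commGraph F) l) (hl' : IsReduced (commGraph F) l')
    (h : wordProd k F l = wordProd k F l') : TraceEq (letterGraph (commGraph F)) l l' :=
  ReducedTrace.mk_eq_mk.mp ((toPerm_wordProd hl).symm.trans (h ▸ toPerm_wordProd hl'))

end GraphGroup

theorem len_inv_mul_mul_le {k : ℕ} {F : Set (Sym2 (Fin k))} {x y z : Grp k F}
    (h1 : le y (x * y * z)) (h2 : len (x * y * z) = len x + len y + len z) :
    len (y⁻¹ * (x * y)) ≤ len x := by
  obtain ⟨u, hu, hul⟩ := exists_minWord x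
  obtain ⟨v, hv, hvl⟩ := exists_minWord y
  obtain ⟨t, ht, htl⟩ := exists_minWord z
  obtain ⟨s, hs, hsl⟩ := exists_minWord (y⁻¹ * (x * y * z))
  have hvs : wordProd k F (v ++ s) = x * y * z := by simp [hv, hs]
  have huvt : wordProd k F (u ++ v ++ t) = x * y * z := by simp [hu, hv, ht, mul_assoc]
  have hvs_red : IsReduced (commGraph F) (v ++ s) := isReduced_of_length_le_len <| by
    rw [hvs, List.length_append, hvl, hsl, h1]
  have huvt_red : IsReduced (commGraph F) (u ++ v ++ t) := isReduced_of_length_le_len <| by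
    rw [huvt, List.length_append, List.length_append, hul, hvl, htl, h2]
  obtain ⟨s', hs'⟩ :=
    (hvs_red.traceEq_of_wordProd_eq huvt_red (hvs.trans huvt.symm)).exists_append_of_append_append
  have hs'_prod : wordProd k F s' = y⁻¹ * (x * y) := by
    have h := hs'.wordProd_eq
    rw [wordProd_append, wordProd_append, hu, hv] at h
    rw [h, inv_mul_cancel_left]
  calc len (y⁻¹ * (x * y)) ≤ s'.length := hs'_prod ▸ len_wordProd_le s'
    _ = len x := by
      have h := hs'.length_eq
      simp only [List.length_append, hul, hvl] at h
      omega

theorem stmt1_general {k : ℕ} {F : Set (Sym2 (Fin k))} (x y z : Grp k F)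
    (h1 : le y (x * y * z))
    (h2 : len (x * y * z) = len x + len y + len z) :
    le y (x * y) := by
  have hconj := len_inv_mul_mul_le h1 h2
  have hxy := len_mul_le x y
  have hxyz := len_mul_le (x * y) z
  have hconjz : len (y⁻¹ * (x * y * z)) ≤ len (y⁻¹ * (x * y)) + len z := by
    simpa only [mul_assoc] using len_mul_le (y⁻¹ * (x * y)) z
  unfold le at h1 ⊢
  omega

/-- if `y ≤ xyz` and `xyz = x·y·z`, then `y ≤ xy`. -/
theorem stmt1 {k : ℕ} (hk : 1 ≤ k) {F : Set (Sym2 (Fin k))} (x y z : Grp k F)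
    (h1 : le y (x * y * z))
    (h2 : len (x * y * z) = len x + len y + len z) :
    le y (x * y) :=
  stmt1_general x y z h1 h2

end GraphGroupPaper
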